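/- arXiv:1410.0868 — 4 statements merged into one kernel-verified Lean document; each statement's English description precedes it below -/
import Mathlib

section
/- Let f: ℝ → ℝ satisfy f(x) = f(|x|), be strictly concave on [0,∞), and subadditive on [0,∞). Then f is sparsifying: for nonnegative reals x₁, ..., xₙ, if ∑_i f(x_i) = f(∑_i x_i), then at most one x_i is nonzero. -/
/-!
Strict concavity on `[0, ∞)` together with `f 0 ≥ 0` (which subadditivity forces) makes `f`
strictly subadditive on positive reals: `f (a + b) < f a + f b`. If two entries `x i`, `x j` were
positive, splitting `∑ x` as `x i` plus the rest would make `f (∑ x)` strictly smaller than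
`f (x i) + f (rest) ≤ ∑ f (x k)`, the last step by iterated subadditivity.
-/

open Finset

theorem StrictConcaveOn.mul_lt_apply_mul {f : ℝ → ℝ} (hf : StrictConcaveOn ℝ (Set.Ici 0) f)
    (hf0 : 0 ≤ f 0) {t x : ℝ} (ht₀ : 0 < t) (ht₁ : t < 1) (hx : 0 < x) :
    t * f x < f (t * x) := by
  have key := hf.2 Set.self_mem_Ici hx.le hx.ne (sub_pos.2 ht₁) ht₀ (sub_add_cancel 1 t)
  simp only [smul_eq_mul, mul_zero, zero_add] at key
  linarith [mul_nonneg (sub_pos.2 ht₁).le hf0]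

theorem StrictConcaveOn.apply_add_lt_add {f : ℝ → ℝ} (hf : StrictConcaveOn ℝ (Set.Ici 0) f)
    (hf0 : 0 ≤ f 0) {a b : ℝ} (ha : 0 < a) (hb : 0 < b) : f (a + b) < f a + f b := by
  have hs : 0 < a + b := add_pos ha hb
  have hfa := hf.mul_lt_apply_mul hf0 (div_pos ha hs)
    ((div_lt_one hs).2 (lt_add_of_pos_right a hb)) hs
  have hfb := hf.mul_lt_apply_mul hf0 (div_pos hb hs)
    ((div_lt_one hs).2 (lt_add_of_pos_left b ha)) hs
  rw [div_mul_cancel₀ _ hs.ne'] at hfa hfb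
  calc f (a + b) = a / (a + b) * f (a + b) + b / (a + b) * f (a + b) := by
        rw [← add_mul, ← add_div, div_self hs.ne', one_mul]
    _ < f a + f b := add_lt_add hfa hfb

theorem strictConcave_subadditive_sparsifying_general (f : ℝ → ℝ)
    (hconc : StrictConcaveOn ℝ (Set.Ici (0 : ℝ)) f)
    (hsub : ∀ a b : ℝ, 0 ≤ a → 0 ≤ b → f (a + b) ≤ f a + f b)
    (n : ℕ) (x : Fin n → ℝ) (hx : ∀ i, 0 ≤ x i)
    (heq : ∑ i, f (x i) = f (∑ i, x i)) :
    ∀ i j, x i ≠ 0 → x j ≠ 0 → i = j := by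
  intro i j hi hj
  by_contra hij
  have hf0 : 0 ≤ f 0 := by simpa using hsub 0 0 le_rfl le_rfl
  have hj_mem : j ∈ univ.erase i := mem_erase.2 ⟨Ne.symm hij, mem_univ j⟩
  have hrest_pos : 0 < ∑ k ∈ univ.erase i, x k :=
    ((hx j).lt_of_ne' hj).trans_le (single_le_sum (fun k _ ↦ hx k) hj_mem)
  have hrest_sub : f (∑ k ∈ univ.erase i, x k) ≤ ∑ k ∈ univ.erase i, f (x k) :=
    le_sum_nonempty_of_subadditive_on_pred f (0 ≤ ·) hsub (fun _ _ ↦ add_nonneg) x _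
      ⟨j, hj_mem⟩ (fun k _ ↦ hx k)
  have hstrict := hconc.apply_add_lt_add hf0 ((hx i).lt_of_ne' hi) hrest_pos
  rw [← add_sum_erase _ _ (mem_univ i), ← add_sum_erase _ _ (mem_univ i)] at heq
  linarith

theorem strictConcave_subadditive_sparsifying (f : ℝ → ℝ)
    (heven : ∀ x : ℝ, f x = f |x|)
    (hconc : StrictConcaveOn ℝ (Set.Ici (0 : ℝ)) f)
    (hsub : ∀ a b : ℝ, 0 ≤ a → 0 ≤ b → f (a + b) ≤ f a + f b)
    (n : ℕ) (x : Fin n → ℝ) (hx : ∀ i, 0 ≤ x i)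
    (heq : ∑ i, f (x i) = f (∑ i, x i)) :
    ∀ i j, x i ≠ 0 → x j ≠ 0 → i = j :=
  strictConcave_subadditive_sparsifying_general f hconc hsub n x hx heq
end

section
/- For any complex m×n matrix M and 0 < p < 2, the entrywise ℓ_p-norm of M is at least the Schatten p-norm of M: (∑_{ij} |m_{ij}|^p)^{1/p} ≥ (∑_k σ_k(M)^p)^{1/p}, where σ_k(M) are the singular values of M. -/
noncomputable def singularValues {m n : ℕ} (M : Matrix (Fin m) (Fin n) ℂ) : Fin n → ℝ :=
  fun k => Real.sqrt ((Matrix.isHermitian_conjTranspose_mul_self M).eigenvalues k)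

/-! For Hermitian `A = U diag(λ) Uᴴ` the diagonal is `A_kk = ∑_j |U_kj|² λ_j`, an average of the
eigenvalues by the doubly stochastic matrix `(|U_kj|²)`; so for concave `f`, Jensen's inequality
gives `∑ f(λ_j) ≤ ∑ f(A_kk)`. With `A = MᴴM` and the function `t ↦ t^(p/2)`, concave because
`p ≤ 2`, this bounds `∑ σ_k^p` by `∑_k (∑_i |m_ik|²)^(p/2)`, and subadditivity of the same
function splits each term into `∑_i |m_ik|^p`. -/

open Finset Matrix

namespace Real

theorem rpow_sum_le_sum_rpow {ι : Type*} (s : Finset ι) {f : ι → ℝ} (hf : ∀ i ∈ s, 0 ≤ f i)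
    {p : ℝ} (hp0 : 0 < p) (hp1 : p ≤ 1) :
    (∑ i ∈ s, f i) ^ p ≤ ∑ i ∈ s, f i ^ p := by
  induction s using Finset.cons_induction with
  | empty => simp [zero_rpow hp0.ne']
  | cons a s _ ih =>
    have hs : ∀ i ∈ s, 0 ≤ f i := fun i hi => hf i (mem_cons_of_mem hi)
    rw [sum_cons, sum_cons]
    calc (f a + ∑ i ∈ s, f i) ^ p ≤ f a ^ p + (∑ i ∈ s, f i) ^ p :=
          rpow_add_le_add_rpow (hf a (mem_cons_self a s)) (sum_nonneg hs) hp0.le hp1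
      _ ≤ f a ^ p + ∑ i ∈ s, f i ^ p := by gcongr; exact ih hs

end Real

namespace Matrix

variable {𝕜 m n : Type*} [RCLike 𝕜]

theorem re_conjTranspose_mul_self_apply_self [Fintype m] (M : Matrix m n 𝕜) (k : n) :
    RCLike.re ((Mᴴ * M) k k) = ∑ i, ‖M i k‖ ^ 2 := by
  simp only [mul_apply, conjTranspose_apply, RCLike.star_def, RCLike.conj_mul]
  norm_cast

variable [Fintype n] [DecidableEq n]

theorem sum_norm_sq_row_of_mem_unitaryGroup {U : Matrix n n 𝕜} (hU : U ∈ unitaryGroup n 𝕜)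
    (i : n) : ∑ j, ‖U i j‖ ^ 2 = 1 := by
  have h := congr_fun₂ (mem_unitaryGroup_iff.mp hU) i i
  simp only [mul_apply, star_apply, RCLike.star_def, RCLike.mul_conj, one_apply_eq] at h
  exact_mod_cast h

theorem sum_norm_sq_col_of_mem_unitaryGroup {U : Matrix n n 𝕜} (hU : U ∈ unitaryGroup n 𝕜)
    (j : n) : ∑ i, ‖U i j‖ ^ 2 = 1 := by
  have h := congr_fun₂ (mem_unitaryGroup_iff'.mp hU) j j
  simp only [mul_apply, star_apply, RCLike.star_def, RCLike.conj_mul, one_apply_eq] at h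
  exact_mod_cast h

namespace IsHermitian

theorem re_apply_self_eq_sum {A : Matrix n n 𝕜} (hA : A.IsHermitian) (k : n) :
    RCLike.re (A k k) =
      ∑ j, ‖(hA.eigenvectorUnitary : Matrix n n 𝕜) k j‖ ^ 2 * hA.eigenvalues j := by
  conv_lhs => rw [hA.spectral_theorem, Unitary.conjStarAlgAut_apply]
  rw [mul_apply]
  simp only [mul_diagonal, star_apply, RCLike.star_def, Function.comp_apply,
    mul_right_comm _ (RCLike.ofReal _), RCLike.mul_conj]
  norm_cast

theorem sum_map_eigenvalues_le_sum_map_diag {A : Matrix n n 𝕜} (hA : A.IsHermitian)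
    {s : Set ℝ} {f : ℝ → ℝ} (hf : ConcaveOn ℝ s f) (hs : ∀ j, hA.eigenvalues j ∈ s) :
    ∑ j, f (hA.eigenvalues j) ≤ ∑ k, f (RCLike.re (A k k)) := by
  set U : Matrix n n 𝕜 := (hA.eigenvectorUnitary : Matrix n n 𝕜)
  have hU : U ∈ unitaryGroup n 𝕜 := hA.eigenvectorUnitary.2
  calc ∑ j, f (hA.eigenvalues j) = ∑ k, ∑ j, ‖U k j‖ ^ 2 • f (hA.eigenvalues j) := by
        rw [sum_comm]
        simp only [smul_eq_mul, ← sum_mul, sum_norm_sq_col_of_mem_unitaryGroup hU, one_mul]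
    _ ≤ ∑ k, f (∑ j, ‖U k j‖ ^ 2 • hA.eigenvalues j) := sum_le_sum fun k _ =>
        hf.le_map_sum (fun j _ => by positivity) (sum_norm_sq_row_of_mem_unitaryGroup hU k)
          fun j _ => hs j
    _ = ∑ k, f (RCLike.re (A k k)) := by simp only [smul_eq_mul, hA.re_apply_self_eq_sum]; rfl

end IsHermitian

end Matrix

open Real in
theorem lp_ge_schatten {m n : ℕ} (M : Matrix (Fin m) (Fin n) ℂ)
    (p : ℝ) (hp0 : 0 < p) (hp2 : p < 2) :
    (∑ i, ∑ j, (‖M i j‖) ^ p) ^ ((1 : ℝ) / p) ≥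
      (∑ k, (singularValues M k) ^ p) ^ ((1 : ℝ) / p) := by
  have hA := isHermitian_conjTranspose_mul_self M
  have hev := eigenvalues_conjTranspose_mul_self_nonneg M
  have hq0 : 0 < p / 2 := by positivity
  have hq1 : p / 2 ≤ 1 := by linarith
  have key : ∑ k, singularValues M k ^ p ≤ ∑ i, ∑ j, ‖M i j‖ ^ p := calc
    ∑ k, singularValues M k ^ p = ∑ k, hA.eigenvalues k ^ (p / 2) := by
      refine sum_congr rfl fun k _ => ?_
      rw [singularValues, sqrt_eq_rpow, ← rpow_mul (hev k), one_div_mul_eq_div]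
    _ ≤ ∑ k, RCLike.re ((Mᴴ * M) k k) ^ (p / 2) :=
      hA.sum_map_eigenvalues_le_sum_map_diag (concaveOn_rpow hq0.le hq1) hev
    _ ≤ ∑ k, ∑ i, (‖M i k‖ ^ 2) ^ (p / 2) := sum_le_sum fun k _ => by
      rw [re_conjTranspose_mul_self_apply_self]
      exact rpow_sum_le_sum_rpow _ (fun i _ => by positivity) hq0 hq1
    _ = ∑ i, ∑ j, ‖M i j‖ ^ p := by
      rw [sum_comm]
      refine sum_congr rfl fun i _ => sum_congr rfl fun j _ => ?_
      rw [← rpow_natCast, ← rpow_mul (norm_nonneg _), Nat.cast_ofNat,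
        mul_div_cancel₀ _ two_ne_zero]
  exact rpow_le_rpow (sum_nonneg fun k _ => rpow_nonneg (sqrt_nonneg _) p) key (by positivity)
end

section
/- For any complex m×n matrix M and p > 2, the entrywise ℓ_p-norm of M is at most the Schatten p-norm of M: (∑_{ij} |m_{ij}|^p)^{1/p} ≤ (∑_k σ_k(M)^p)^{1/p}. -/
open Finset Matrix

theorem Real.sum_rpow_le_rpow_sum {ι : Type*} (s : Finset ι) {f : ι → ℝ}
    (hf : ∀ i ∈ s, 0 ≤ f i) {q : ℝ} (hq : 1 ≤ q) :
    ∑ i ∈ s, f i ^ q ≤ (∑ i ∈ s, f i) ^ q := by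
  classical
  induction s using Finset.induction_on with
  | empty => simp [Real.zero_rpow (by linarith : q ≠ 0)]
  | insert a s ha ih =>
    simp only [Finset.forall_mem_insert] at hf
    rw [sum_insert ha, sum_insert ha]
    calc f a ^ q + ∑ i ∈ s, f i ^ q ≤ f a ^ q + (∑ i ∈ s, f i) ^ q := by gcongr; exact ih hf.2
      _ ≤ (f a + ∑ i ∈ s, f i) ^ q := Real.add_rpow_le_rpow_add hf.1 (sum_nonneg hf.2) hq

theorem ConvexOn.sum_comp_mulVec_le_of_mem_doublyStochastic {n : Type*} [Fintype n]
    [DecidableEq n] {W : Matrix n n ℝ} (hW : W ∈ doublyStochastic ℝ n) {s : Set ℝ}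
    {φ : ℝ → ℝ} (hφ : ConvexOn ℝ s φ) {x : n → ℝ} (hx : ∀ k, x k ∈ s) :
    ∑ j, φ ((W *ᵥ x) j) ≤ ∑ k, φ (x k) :=
  calc ∑ j, φ ((W *ᵥ x) j) ≤ ∑ j, ∑ k, W j k * φ (x k) := by
        refine sum_le_sum fun j _ => hφ.map_sum_le (fun k _ => nonneg_of_mem_doublyStochastic hW)
          (sum_row_of_mem_doublyStochastic hW j) fun k _ => hx k
    _ = ∑ k, φ (x k) := by
        rw [sum_comm]
        simp only [← sum_mul, sum_col_of_mem_doublyStochastic hW, one_mul]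

namespace Matrix

theorem sum_norm_sq_eq_re_conjTranspose_mul_self {m n 𝕜 : Type*} [Fintype m] [RCLike 𝕜]
    (M : Matrix m n 𝕜) (j : n) :
    ∑ i, ‖M i j‖ ^ 2 = RCLike.re ((Mᴴ * M) j j) := by
  simp [mul_apply, RCLike.conj_mul]

variable {n 𝕜 : Type*} [Fintype n] [DecidableEq n] [RCLike 𝕜]

theorem map_norm_sq_mem_doublyStochastic {U : Matrix n n 𝕜} (hU : U ∈ unitaryGroup n 𝕜) :
    U.map (‖·‖ ^ 2) ∈ doublyStochastic ℝ n := by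
  rw [mem_doublyStochastic_iff_sum]
  refine ⟨fun i j => sq_nonneg _, fun i => ?_, fun j => ?_⟩
  · have h := congrFun (congrFun (mem_unitaryGroup_iff.mp hU) i) i
    simp only [mul_apply, star_apply, one_apply_eq, RCLike.star_def, RCLike.mul_conj] at h
    exact_mod_cast h
  · have h := congrFun (congrFun (mem_unitaryGroup_iff'.mp hU) j) j
    simp only [mul_apply, star_apply, one_apply_eq, RCLike.star_def, RCLike.conj_mul] at h
    exact_mod_cast h

theorem IsHermitian.re_apply_self_eq_mulVec_eigenvalues {A : Matrix n n 𝕜} (hA : A.IsHermitian)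
    (j : n) :
    RCLike.re (A j j) =
      ((hA.eigenvectorUnitary : Matrix n n 𝕜).map (‖·‖ ^ 2) *ᵥ hA.eigenvalues) j := by
  conv_lhs => rw [hA.spectral_theorem, Unitary.conjStarAlgAut_apply]
  simp only [mul_apply, diagonal_apply, mul_ite, mul_zero, sum_ite_eq', mem_univ, if_true,
    star_apply, RCLike.star_def, Function.comp_apply, map_sum, mulVec, dotProduct, map_apply]
  refine sum_congr rfl fun k _ => ?_
  rw [mul_right_comm, RCLike.mul_conj, ← RCLike.ofReal_pow, ← RCLike.ofReal_mul, RCLike.ofReal_re]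

end Matrix

theorem lp_le_schatten {m n : ℕ} (M : Matrix (Fin m) (Fin n) ℂ)
    (p : ℝ) (hp : 2 < p) :
    (∑ i, ∑ j, ‖M i j‖ ^ p) ^ ((1 : ℝ) / p) ≤
      (∑ k, (singularValues M k) ^ p) ^ ((1 : ℝ) / p) := by
  have hq : 1 ≤ p / 2 := by linarith
  have hA := isHermitian_conjTranspose_mul_self M
  have hev : ∀ k, 0 ≤ hA.eigenvalues k := eigenvalues_conjTranspose_mul_self_nonneg M
  refine Real.rpow_le_rpow (by positivity) ?_ (one_div_nonneg.2 (by linarith))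
  calc ∑ i, ∑ j, ‖M i j‖ ^ p = ∑ j, ∑ i, (‖M i j‖ ^ 2) ^ (p / 2) := by
        rw [sum_comm]
        simp_rw [Real.rpow_div_two_eq_sqrt _ (sq_nonneg _), Real.sqrt_sq (norm_nonneg _)]
    _ ≤ ∑ j, (∑ i, ‖M i j‖ ^ 2) ^ (p / 2) :=
        sum_le_sum fun j _ => Real.sum_rpow_le_rpow_sum _ (fun i _ => sq_nonneg _) hq
    _ = ∑ j, (((hA.eigenvectorUnitary : Matrix (Fin n) (Fin n) ℂ).map (‖·‖ ^ 2)
          *ᵥ hA.eigenvalues) j) ^ (p / 2) := by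
        simp_rw [sum_norm_sq_eq_re_conjTranspose_mul_self, hA.re_apply_self_eq_mulVec_eigenvalues]
    _ ≤ ∑ k, hA.eigenvalues k ^ (p / 2) :=
        (convexOn_rpow hq).sum_comp_mulVec_le_of_mem_doublyStochastic
          (map_norm_sq_mem_doublyStochastic hA.eigenvectorUnitary.2) hev
    _ = ∑ k, singularValues M k ^ p := by
        simp_rw [singularValues, Real.rpow_div_two_eq_sqrt _ (hev _)]
end

section
/- Let M ∈ ℝ^{n×d} be a matrix whose rows are the vertices of an axis-aligned hypercube centered at the origin (so that the convex hull of the rows of M is [−c, c]^d with c = ‖M‖_∞). Then for any G ∈ ℝ^{d×d} with det(G) = 1, ‖M G‖_∞ ≥ ‖M‖_∞, where ‖X‖_∞ = max_{ij} |x_{ij}|. -/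
/-!
A linear map of determinant one preserves Lebesgue measure, so it maps the cube `[-c, c]^d`,
the convex hull of the rows of `M`, onto the convex hull of the rows of `M * G`, a set of the
same volume `(2c)^d`. That hull lies in the cube `[-c', c']^d` with `c' = ‖M * G‖_∞`, whence
`(2c)^d ≤ (2c')^d` and `c ≤ c'`.
-/

open MeasureTheory Metric Set

theorem addHaar_convexHull_image_of_abs_det_eq_one {E : Type*} [NormedAddCommGroup E]
    [NormedSpace ℝ E] [MeasurableSpace E] [BorelSpace E] [FiniteDimensional ℝ E]
    (μ : Measure E) [μ.IsAddHaarMeasure] {f : E →ₗ[ℝ] E} (hf : |LinearMap.det f| = 1)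
    (S : Set E) : μ (convexHull ℝ (f '' S)) = μ (convexHull ℝ S) := by
  rw [← f.image_convexHull, Measure.addHaar_image_linearMap, hf, ENNReal.ofReal_one, one_mul]

section

variable {ι : Type*} [Fintype ι]

theorem setOf_forall_abs_le_eq_closedBall {r : ℝ} (hr : 0 ≤ r) :
    {x : ι → ℝ | ∀ j, |x j| ≤ r} = closedBall 0 r := by
  ext x
  simp [pi_norm_le_iff_of_nonneg hr]

theorem le_of_volume_pi_closedBall_le [Nonempty ι] {r s : ℝ} (hs : 0 ≤ s)
    (h : volume (closedBall (0 : ι → ℝ) r) ≤ volume (closedBall (0 : ι → ℝ) s)) :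
    r ≤ s := by
  by_contra! hsr
  have hr : 0 ≤ r := hs.trans hsr.le
  rw [Real.volume_pi_closedBall 0 hr, Real.volume_pi_closedBall 0 hs,
    ENNReal.ofReal_le_ofReal_iff (by positivity),
    pow_le_pow_iff_left₀ (by positivity) (by positivity) Fintype.card_ne_zero] at h
  linarith

theorem le_of_convexHull_eq_closedBall_of_mapsTo [Nonempty ι] {S : Set (ι → ℝ)} {r s : ℝ}
    (hS : convexHull ℝ S = closedBall 0 r) {f : (ι → ℝ) →ₗ[ℝ] (ι → ℝ)}
    (hf : |LinearMap.det f| = 1) (hs : 0 ≤ s)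
    (hfS : MapsTo f S (closedBall 0 s)) : r ≤ s := by
  refine le_of_volume_pi_closedBall_le (ι := ι) hs ?_
  calc volume (closedBall (0 : ι → ℝ) r) = volume (convexHull ℝ (f '' S)) := by
        rw [addHaar_convexHull_image_of_abs_det_eq_one volume hf, hS]
    _ ≤ volume (closedBall (0 : ι → ℝ) s) :=
        measure_mono (convexHull_min hfS.image_subset (convex_closedBall 0 s))

end

theorem hypercube_linfty_optimal_general {n d : ℕ} (hd : 0 < d)
    (M : Matrix (Fin n) (Fin d) ℝ) (c : ℝ)
    (hc : c = ⨆ p : Fin n × Fin d, |M p.1 p.2|)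
    (hcube : convexHull ℝ (Set.range fun i => M i) = {x : Fin d → ℝ | ∀ j, |x j| ≤ c})
    (G : Matrix (Fin d) (Fin d) ℝ) (hG : G.det = 1) :
    (⨆ p : Fin n × Fin d, |(M * G) p.1 p.2|) ≥ ⨆ p : Fin n × Fin d, |M p.1 p.2| := by
  have : Nonempty (Fin d) := ⟨⟨0, hd⟩⟩
  have hc0 : 0 ≤ c := hc ▸ Real.iSup_nonneg fun _ => abs_nonneg _
  have hs0 : 0 ≤ ⨆ p : Fin n × Fin d, |(M * G) p.1 p.2| :=
    Real.iSup_nonneg fun _ => abs_nonneg _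
  rw [setOf_forall_abs_le_eq_closedBall hc0] at hcube
  rw [← hc]
  refine le_of_convexHull_eq_closedBall_of_mapsTo hcube (f := Matrix.toLin' G.transpose) ?_ hs0 ?_
  · rw [LinearMap.det_toLin', Matrix.det_transpose, hG, abs_one]
  · rintro _ ⟨i, rfl⟩
    rw [mem_closedBall_zero_iff, pi_norm_le_iff_of_nonneg hs0]
    intro j
    rw [Matrix.toLin'_apply, Matrix.mulVec_transpose, ← Matrix.mul_apply_eq_vecMul,
      Real.norm_eq_abs]
    exact le_ciSup (f := fun p : Fin n × Fin d => |(M * G) p.1 p.2|)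
      (Finite.bddAbove_range _) (i, j)

theorem hypercube_linfty_optimal {n d : ℕ} (hn : 0 < n) (hd : 0 < d)
    (M : Matrix (Fin n) (Fin d) ℝ) (c : ℝ)
    (hc : c = ⨆ p : Fin n × Fin d, |M p.1 p.2|)
    (hcube : convexHull ℝ (Set.range fun i => M i) = {x : Fin d → ℝ | ∀ j, |x j| ≤ c})
    (G : Matrix (Fin d) (Fin d) ℝ) (hG : G.det = 1) :
    (⨆ p : Fin n × Fin d, |(M * G) p.1 p.2|) ≥ ⨆ p : Fin n × Fin d, |M p.1 p.2| :=
  hypercube_linfty_optimal_general hd M c hc hcube G hG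
end
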